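/- arXiv:1503.00993 — 2 statements merged into one kernel-verified Lean document; each statement's English description precedes it below -/
import Mathlib

section
/- Let a, b be real numbers with b ≠ 0, and define the Sontag feedback value v = -(a + √(a² + b⁴))/b. Then a + b·v = -√(a² + b⁴), and in particular a + b·v ≤ -b² < 0. -/
theorem add_mul_neg_add_div_self {K : Type*} [Field K] {b : K} (hb : b ≠ 0) (a c : K) :
    a + b * (-(a + c) / b) = -c := by
  rw [mul_div_cancel₀ _ hb]
  ring

theorem sq_le_sqrt_sq_add_pow_four (a b : ℝ) : b ^ 2 ≤ √(a ^ 2 + b ^ 4) :=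
  Real.le_sqrt_of_sq_le <| by
    rw [← pow_mul]
    exact le_add_of_nonneg_left (sq_nonneg a)

/-- Sontag's universal formula (scalar case): with `a = L_fV`, `b = L_gV`, `b ≠ 0`,
the feedback `v = -(a + √(a² + b⁴))/b` yields closed-loop Lyapunov derivative
`a + b·v = -√(a² + b⁴) ≤ -b² < 0`. -/
theorem sontag_closed_loop_derivative (a b : ℝ) (hb : b ≠ 0)
    (v : ℝ) (hv : v = -(a + Real.sqrt (a ^ 2 + b ^ 4)) / b) :
    a + b * v = -Real.sqrt (a ^ 2 + b ^ 4) ∧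
      a + b * v ≤ -b ^ 2 ∧ -b ^ 2 < 0 := by
  have hclosed : a + b * v = -√(a ^ 2 + b ^ 4) := hv ▸ add_mul_neg_add_div_self hb a _
  exact ⟨hclosed, hclosed ▸ neg_le_neg (sq_le_sqrt_sq_add_pow_four a b),
    neg_neg_of_pos (by positivity)⟩
end

section
/- The function φ : ℝ × ℝ → ℝ defined by φ(a,b) = -(a + √(a² + b⁴))/b for b ≠ 0 and φ(a,b) = 0 for b = 0 is continuous at every point (a,b) ∈ ℝ × ℝ such that b ≠ 0 or a < 0. -/
/-- Continuity of the Sontag feedback `φ(a,b) = -(a + √(a² + b⁴))/b` (for `b ≠ 0`,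
and `φ(a,b) = 0` for `b = 0`) at every point where `b ≠ 0` or `a < 0`. -/
theorem sontag_feedback_continuousAt (φ : ℝ × ℝ → ℝ)
    (hφ : ∀ p : ℝ × ℝ,
      φ p = if p.2 ≠ 0 then -(p.1 + Real.sqrt (p.1 ^ 2 + p.2 ^ 4)) / p.2 else 0)
    (a b : ℝ) (h : b ≠ 0 ∨ a < 0) :
    ContinuousAt φ (a, b) := by
  set U : Set (ℝ × ℝ) := {p | p.2 ≠ 0 ∨ p.1 < 0} with hU
  have hUopen : IsOpen U := by
    have : U = (Prod.snd ⁻¹' {(0:ℝ)}ᶜ) ∪ (Prod.fst ⁻¹' Set.Iio (0:ℝ)) := by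
      ext p; simp [hU]
    rw [this]
    exact (isOpen_compl_singleton.preimage continuous_snd).union
      (isOpen_Iio.preimage continuous_fst)
  have hden : ∀ p ∈ U, 0 < Real.sqrt (p.1 ^ 2 + p.2 ^ 4) - p.1 := by
    rintro ⟨x, y⟩ (hy | hx)
    · simp only at hy ⊢
      have h1 : Real.sqrt (x ^ 2) < Real.sqrt (x ^ 2 + y ^ 4) := by
        apply Real.sqrt_lt_sqrt (sq_nonneg x)
        nlinarith [pow_pos (abs_pos.mpr hy) 4, sq_abs y]
      rw [Real.sqrt_sq_eq_abs] at h1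
      have := le_abs_self x
      linarith
    · simp only at hx ⊢
      have := Real.sqrt_nonneg (x ^ 2 + y ^ 4)
      linarith
  have heq : ∀ p ∈ U, φ p = -(p.2 ^ 3) / (Real.sqrt (p.1 ^ 2 + p.2 ^ 4) - p.1) := by
    rintro ⟨x, y⟩ hp
    have hd := hden _ hp
    simp only at hd ⊢
    rw [hφ]
    by_cases hy : y = 0
    · subst hy; simp
    · simp only [hy, if_pos, ne_eq, not_false_iff]
      have hs : Real.sqrt (x ^ 2 + y ^ 4) ^ 2 = x ^ 2 + y ^ 4 :=
        Real.sq_sqrt (by positivity)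
      rw [div_eq_div_iff hy (ne_of_gt hd)]
      nlinarith [hs]
  have hmem : (a, b) ∈ U := by
    rcases h with h | h
    · exact Or.inl h
    · exact Or.inr h
  have hg : ContinuousAt
      (fun p : ℝ × ℝ => -(p.2 ^ 3) / (Real.sqrt (p.1 ^ 2 + p.2 ^ 4) - p.1)) (a, b) := by
    apply ContinuousAt.div
    · fun_prop
    · exact ((Real.continuous_sqrt.comp (by fun_prop)).sub continuous_fst).continuousAt
    · exact ne_of_gt (hden _ hmem)
  exact hg.congr (Filter.eventuallyEq_of_mem (hUopen.mem_nhds hmem) heq).symm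
end
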